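/- Let Ω_{2d} ⊆ ℝ² be a bounded measurable set with compact closure K. Let (α_j)_{j∈ℕ} and α be functions ℝ² → ℝ, each ContDiff ℝ 1, such that α_j → α and fderiv ℝ α_j → fderiv ℝ α uniformly on K. Let (u_j)_{j∈ℕ} and u be functions ℝ³ → ℝ³, each ContDiff ℝ 3, such that for each 0 ≤ i ≤ 3 the functions iteratedFDeriv ℝ i u_j converge to iteratedFDeriv ℝ i u uniformly on every compact subset of ℝ³. Let ℱ be a continuous real-valued function on ℝ³ × ℝ³ × L(ℝ³, ℝ³) × L²(ℝ³; ℝ³) × L³(ℝ³; ℝ³) (with Lⁱ the continuous i-multilinear maps ℝ³ → ℝ³). For s ∈ ℝ² write x_j(s) = (s₁, s₂, α_j(s)) and x(s) = (s₁, s₂, α(s)). Then ∫_{Ω_{2d}} ℱ(x_j(s), u_j(x_j(s)), iteratedFDeriv ℝ 1 u_j(x_j(s)), iteratedFDeriv ℝ 2 u_j(x_j(s)), iteratedFDeriv ℝ 3 u_j(x_j(s)))·√(1 + ‖∇α_j(s)‖²) ds → ∫_{Ω_{2d}} ℱ(x(s), u(x(s)), iteratedFDeriv ℝ 1 u(x(s)),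 iteratedFDeriv ℝ 2 u(x(s)), iteratedFDeriv ℝ 3 u(x(s)))·√(1 + ‖∇α(s)‖²) ds as j → ∞. -/

import Mathlib

open MeasureTheory Filter Set Topology

/-- The graph chart `s ↦ (s₁, s₂, α(s))` of the design variable `α`. -/
noncomputable def graphMap (α : EuclideanSpace ℝ (Fin 2) → ℝ)
    (s : EuclideanSpace ℝ (Fin 2)) : EuclideanSpace ℝ (Fin 3) :=
  (WithLp.equiv 2 (Fin 3 → ℝ)).symm ![s 0, s 1, α s]

/-! On `K = closure Ω2d` the graph charts converge uniformly. Since they eventually take values in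
a fixed compact neighbourhood of the limit graph, on which the derivatives of `u j` converge
uniformly, the jets of `u j` along the charts converge uniformly on `K`, and so does any continuous
function of them, in particular the integrands. Uniformly convergent continuous functions on a
compact set are uniformly bounded, so dominated convergence applies on the finite-measure set
`Ω2d`. -/

section UniformComposition

variable {ι X Y Z : Type*} [UniformSpace Y] [UniformSpace Z] {p : Filter ι}

theorem TendstoUniformlyOn.prodMk_diag {F : ι → X → Y} {f : X → Y} {G : ι → X → Z} {g : X → Z}
    {s : Set X} (hF : TendstoUniformlyOn F f p s) (hG : TendstoUniformlyOn G g p s) :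
    TendstoUniformlyOn (fun i x => (F i x, G i x)) (fun x => (f x, g x)) p s :=
  fun r hr => ((hF.prodMk hG) r hr).diag_of_prod

variable [TopologicalSpace X]

theorem Continuous.comp_tendstoUniformlyOn_of_isCompact {h : Y → Z} (hh : Continuous h)
    {G : ι → X → Y} {g : X → Y} {K : Set X} (hK : IsCompact K) (hg : ContinuousOn g K)
    (hG : TendstoUniformlyOn G g p K) :
    TendstoUniformlyOn (fun i x => h (G i x)) (fun x => h (g x)) p K := by
  intro r hr
  filter_upwards [hG _ ((hK.image_of_continuousOn hg).uniformContinuousAt_of_continuousAt h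
    (fun y _ => hh.continuousAt) hr)] with i hi x hx
  exact hi x hx (mem_image_of_mem g hx)

theorem tendstoUniformlyOn_comp_of_isCompact [WeaklyLocallyCompactSpace Y]
    {F : ι → Y → Z} {f : Y → Z} (hF : ∀ C, IsCompact C → TendstoUniformlyOn F f p C)
    (hf : Continuous f) {G : ι → X → Y} {g : X → Y} {K : Set X} (hK : IsCompact K)
    (hg : ContinuousOn g K) (hG : TendstoUniformlyOn G g p K) :
    TendstoUniformlyOn (fun i x => F i (G i x)) (fun x => f (g x)) p K := by
  intro r hr
  obtain ⟨t, ht, htr⟩ := comp_mem_uniformity_sets hr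
  have hgK : IsCompact (g '' K) := hK.image_of_continuousOn hg
  obtain ⟨C, hC, hgC⟩ := exists_compact_superset hgK
  obtain ⟨V, hV, -, hVC⟩ := lebesgue_number_of_compact_open hgK isOpen_interior hgC
  filter_upwards [hG V hV, hF C hC t ht, hf.comp_tendstoUniformlyOn_of_isCompact hK hg hG t ht]
    with i hGi hFi hfGi x hx
  have hGx : G i x ∈ C := interior_subset (hVC _ (mem_image_of_mem g hx) (hGi x hx))
  exact htr (SetRel.prodMk_mem_comp (hfGi x hx) (hFi _ hGx))

end UniformComposition

theorem TendstoUniformlyOn.tendsto_setIntegral_of_isCompact {ι X E : Type*} [TopologicalSpace X]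
    [T2Space X] [MeasurableSpace X] [OpensMeasurableSpace X] {μ : Measure X}
    [IsFiniteMeasureOnCompacts μ] [NormedAddCommGroup E] [NormedSpace ℝ E] {l : Filter ι}
    [l.IsCountablyGenerated] {F : ι → X → E} {f : X → E} {K s : Set X} (hK : IsCompact K)
    (hsK : s ⊆ K) (hF : ∀ᶠ i in l, ContinuousOn (F i) K) (h : TendstoUniformlyOn F f l K) :
    Tendsto (fun i => ∫ x in s, F i x ∂μ) l (𝓝 (∫ x in s, f x ∂μ)) := by
  rcases l.eq_or_neBot with rfl | hl
  · simp
  obtain ⟨C, hC⟩ := hK.bddAbove_image (h.continuousOn hF.frequently).norm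
  have hμ : IsFiniteMeasure (μ.restrict s) :=
    ⟨by simpa using (measure_mono hsK).trans_lt hK.measure_lt_top⟩
  have hsub : μ.restrict s ≤ μ.restrict K := Measure.restrict_mono hsK le_rfl
  apply tendsto_integral_filter_of_dominated_convergence (fun _ => C + 1)
  · exact hF.mono fun i hi =>
      (hi.aestronglyMeasurable_of_isCompact hK hK.measurableSet).mono_measure hsub
  · filter_upwards [(uniformContinuous_norm.comp_tendstoUniformlyOn h).eventually_forall_le
      (lt_add_one C) (by simpa [upperBounds] using hC)] with i hi
    exact ae_mono hsub (ae_restrict_of_forall_mem hK.measurableSet hi)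
  · exact integrable_const _
  · exact ae_mono hsub (ae_restrict_of_forall_mem hK.measurableSet fun x hx => h.tendsto_at hx)

theorem continuous_graphMap {α : EuclideanSpace ℝ (Fin 2) → ℝ} (hα : Continuous α) :
    Continuous (graphMap α) :=
  (PiLp.continuous_toLp 2 _).comp (by fun_prop)

theorem dist_graphMap (α β : EuclideanSpace ℝ (Fin 2) → ℝ) (s : EuclideanSpace ℝ (Fin 2)) :
    dist (graphMap α s) (graphMap β s) = dist (α s) (β s) := by
  simp [graphMap, EuclideanSpace.dist_eq, Fin.sum_univ_three, Real.sqrt_sq_eq_abs, Real.dist_eq]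

theorem TendstoUniformlyOn.graphMap {ι : Type*} {p : Filter ι}
    {α : ι → EuclideanSpace ℝ (Fin 2) → ℝ} {β : EuclideanSpace ℝ (Fin 2) → ℝ}
    {s : Set (EuclideanSpace ℝ (Fin 2))} (h : TendstoUniformlyOn α β p s) :
    TendstoUniformlyOn (fun i => graphMap (α i)) (graphMap β) p s := by
  rw [Metric.tendstoUniformlyOn_iff] at h ⊢
  simpa only [dist_graphMap] using h

section Jet

variable (𝕜 : Type*) {E F : Type*} [NontriviallyNormedField 𝕜] [NormedAddCommGroup E]
  [NormedSpace 𝕜 E] [NormedAddCommGroup F] [NormedSpace 𝕜 F]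

noncomputable def jet3 (u : E → F) (x : E) :
    F × (E [×1]→L[𝕜] F) × (E [×2]→L[𝕜] F) × (E [×3]→L[𝕜] F) :=
  (u x, iteratedFDeriv 𝕜 1 u x, iteratedFDeriv 𝕜 2 u x, iteratedFDeriv 𝕜 3 u x)

variable {𝕜}

theorem ContDiff.continuous_jet3 {u : E → F} (hu : ContDiff 𝕜 3 u) : Continuous (jet3 𝕜 u) :=
  hu.continuous.prodMk <|
    (hu.continuous_iteratedFDeriv (by norm_num)).prodMk <|
    (hu.continuous_iteratedFDeriv (by norm_num)).prodMk (hu.continuous_iteratedFDeriv le_rfl)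

theorem TendstoUniformlyOn.of_iteratedFDeriv_zero {ι : Type*} {p : Filter ι} {u : ι → E → F}
    {v : E → F} {s : Set E}
    (h : TendstoUniformlyOn (fun i => iteratedFDeriv 𝕜 0 (u i)) (iteratedFDeriv 𝕜 0 v) p s) :
    TendstoUniformlyOn u v p s := by
  simpa [Function.comp_def] using
    (continuousMultilinearCurryFin0 𝕜 E F).isometry.uniformContinuous.comp_tendstoUniformlyOn h

theorem tendstoUniformlyOn_jet3 {ι : Type*} {p : Filter ι} {u : ι → E → F} {v : E → F}
    {s : Set E} (h : ∀ i ≤ 3,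
      TendstoUniformlyOn (fun j => iteratedFDeriv 𝕜 i (u j)) (iteratedFDeriv 𝕜 i v) p s) :
    TendstoUniformlyOn (fun j => jet3 𝕜 (u j)) (jet3 𝕜 v) p s :=
  (h 0 (by norm_num)).of_iteratedFDeriv_zero.prodMk_diag <|
    (h 1 (by norm_num)).prodMk_diag <| (h 2 (by norm_num)).prodMk_diag (h 3 le_rfl)

end Jet

theorem stmt16 (Ω2d : Set (EuclideanSpace ℝ (Fin 2)))
    (hΩ2dbd : IsCompact (closure Ω2d))
    (α : ℕ → EuclideanSpace ℝ (Fin 2) → ℝ) (αlim : EuclideanSpace ℝ (Fin 2) → ℝ)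
    (hα : ∀ j, ContDiff ℝ 1 (α j)) (hαlim : ContDiff ℝ 1 αlim)
    (hαconv : TendstoUniformlyOn (fun j => α j) αlim atTop (closure Ω2d))
    (hαconv' : TendstoUniformlyOn (fun j => fderiv ℝ (α j)) (fderiv ℝ αlim) atTop
      (closure Ω2d))
    (u : ℕ → EuclideanSpace ℝ (Fin 3) → EuclideanSpace ℝ (Fin 3))
    (ulim : EuclideanSpace ℝ (Fin 3) → EuclideanSpace ℝ (Fin 3))
    (hu : ∀ j, ContDiff ℝ 3 (u j)) (hulim : ContDiff ℝ 3 ulim)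
    (huconv : ∀ i ≤ 3, ∀ C : Set (EuclideanSpace ℝ (Fin 3)), IsCompact C →
      TendstoUniformlyOn (fun j => iteratedFDeriv ℝ i (u j))
        (iteratedFDeriv ℝ i ulim) atTop C)
    (F : EuclideanSpace ℝ (Fin 3) × EuclideanSpace ℝ (Fin 3) ×
        (EuclideanSpace ℝ (Fin 3) [×1]→L[ℝ] EuclideanSpace ℝ (Fin 3)) ×
        (EuclideanSpace ℝ (Fin 3) [×2]→L[ℝ] EuclideanSpace ℝ (Fin 3)) ×
        (EuclideanSpace ℝ (Fin 3) [×3]→L[ℝ] EuclideanSpace ℝ (Fin 3)) → ℝ)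
    (hF : Continuous F) :
    Tendsto (fun j => ∫ s in Ω2d,
        F (graphMap (α j) s, u j (graphMap (α j) s),
            iteratedFDeriv ℝ 1 (u j) (graphMap (α j) s),
            iteratedFDeriv ℝ 2 (u j) (graphMap (α j) s),
            iteratedFDeriv ℝ 3 (u j) (graphMap (α j) s)) *
          Real.sqrt (1 + ‖fderiv ℝ (α j) s‖ ^ 2)) atTop
      (𝓝 (∫ s in Ω2d,
        F (graphMap αlim s, ulim (graphMap αlim s),
            iteratedFDeriv ℝ 1 ulim (graphMap αlim s),
            iteratedFDeriv ℝ 2 ulim (graphMap αlim s),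
            iteratedFDeriv ℝ 3 ulim (graphMap αlim s)) *
          Real.sqrt (1 + ‖fderiv ℝ αlim s‖ ^ 2))) := by
  have hcont : ∀ {v : EuclideanSpace ℝ (Fin 3) → EuclideanSpace ℝ (Fin 3)}
      {β : EuclideanSpace ℝ (Fin 2) → ℝ}, ContDiff ℝ 3 v → ContDiff ℝ 1 β →
      Continuous fun s => ((graphMap β s, jet3 ℝ v (graphMap β s)), fderiv ℝ β s) :=
    fun hv hβ => ((continuous_graphMap hβ.continuous).prodMk
      (hv.continuous_jet3.comp (continuous_graphMap hβ.continuous))).prodMk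
      (hβ.continuous_fderiv one_ne_zero)
  have hjet : TendstoUniformlyOn (fun j s => jet3 ℝ (u j) (graphMap (α j) s))
      (fun s => jet3 ℝ ulim (graphMap αlim s)) atTop (closure Ω2d) :=
    tendstoUniformlyOn_comp_of_isCompact
      (fun C hC => tendstoUniformlyOn_jet3 fun i hi => huconv i hi C hC) hulim.continuous_jet3
      hΩ2dbd (continuous_graphMap hαlim.continuous).continuousOn hαconv.graphMap
  have hdata := (hαconv.graphMap.prodMk_diag hjet).prodMk_diag hαconv'
  have hH : Continuous fun q : (EuclideanSpace ℝ (Fin 3) × _) ×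
      (EuclideanSpace ℝ (Fin 2) →L[ℝ] ℝ) => F q.1 * Real.sqrt (1 + ‖q.2‖ ^ 2) := by
    fun_prop
  refine (hH.comp_tendstoUniformlyOn_of_isCompact hΩ2dbd (hcont hulim hαlim).continuousOn
    hdata).tendsto_setIntegral_of_isCompact hΩ2dbd subset_closure ?_
  exact Eventually.of_forall fun j => (hH.comp (hcont (hu j) (hα j))).continuousOn
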